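/- Let Φ = ⋀_{i=1}^n C_i be a 3-CNF formula over propositional variables v₁,…,v_m, with C_i = p_{i₁}∨p_{i₂}∨p_{i₃} and literals p ∈ {v₁,…,v_m,¬v₁,…,¬v_m}. Let 𝔄 be the structure of empty signature with domain consisting of the literals v₁,…,v_m,¬v₁,…,¬v_m, the elements 0 and 1, and fresh pairwise distinct elements a₁,a₂,…. Let X be the team over variables (w,c,c₁,c₂,z,x,y,t) containing, for each clause C_i: the three assignments (0,i,1,1,i_k,p_{i_k},p_{i_k},a_{6i+k}) for k=1,2,3 (where i_k is the index of the propositional variable underlying literal p_{i_k}), and the three assignments (1,i,0,0,0,0,0,a_{6i+4}), (1,i,1,0,0,0,0,a_{6i+4}), (1,i,0,1,0,0,0,a_{6i+4}); and, for each variable v_i, the two assignments (0,0,0,0,i,v_i,v_i,a_{6(n+1)+i}) and (0,0,0,0,i,¬v_i,¬v_i,a_{6(n+1)+i}). Then Φ is satisfiable if and only if 𝔄⊨_X (w≠1 ∧ x⊥_t y) ∨ (c₁⊥_c c₂ ∧ x⊥_z y). -/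
import Mathlib


/- Statement 5.  Reduction of 3-SAT to model-checking of
  (w ≠ 1 ∧ x ⊥_t y) ∨ (c₁ ⊥_c c₂ ∧ x ⊥_z y).

A 3-CNF formula Φ = ⋀_{i=1}^n C_i over propositional variables v₁,…,v_m,
where each clause C_i consists of three literals, is encoded by
`Φ : Fin n → Fin 3 → Fin m × Bool` (a literal is a variable together with a
sign; `true` = positive).  The domain of the structure 𝔄 (of empty signature)
consists of the 2m literals, the natural numbers (among them 0 and 1), and
fresh pairwise distinct elements a₁, a₂, … .  Clauses are numbered 1,…,n and
propositional variables 1,…,m. -/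

/-- The eight team variables (w, c, c₁, c₂, z, x, y, t). -/
inductive V8 : Type where
  | w | c | c1 | c2 | z | x | y | t
deriving DecidableEq

/-- The domain: literals `lit v b` (with `b = true` for `v` and `b = false`
for `¬v`), natural numbers `num k` (among them 0 and 1), and fresh pairwise
distinct elements `aux k` (the elements `a_k`). -/
inductive Dom (m : ℕ) : Type where
  | lit (v : Fin m) (b : Bool)
  | num (k : ℕ)
  | aux (k : ℕ)
deriving DecidableEq

/-- For clause `i` (numbered `i+1`) and position `k`, the assignment
`(0, i+1, 1, 1, i_k, p_{i_k}, p_{i_k}, a_{6(i+1)+(k+1)})`, where `i_k` is the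
(1-based) index of the propositional variable underlying the literal
`p_{i_k}`. -/
def clauseRow {n m : ℕ} (Φ : Fin n → Fin 3 → Fin m × Bool)
    (i : Fin n) (k : Fin 3) : V8 → Dom m := fun v =>
  match v with
  | .w => .num 0
  | .c => .num (i.val + 1)
  | .c1 => .num 1
  | .c2 => .num 1
  | .z => .num ((Φ i k).1.val + 1)
  | .x => .lit (Φ i k).1 (Φ i k).2
  | .y => .lit (Φ i k).1 (Φ i k).2
  | .t => .aux (6 * (i.val + 1) + (k.val + 1))

/-- For clause `i` (numbered `i+1`), the three assignments
`(1, i+1, 0, 0, 0, 0, 0, a_{6(i+1)+4})`, `(1, i+1, 1, 0, 0, 0, 0, a_{6(i+1)+4})`,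
`(1, i+1, 0, 1, 0, 0, 0, a_{6(i+1)+4})` (for `j = 0, 1, 2`). -/
def negRow {m : ℕ} (n : ℕ) (i : Fin n) (j : Fin 3) : V8 → Dom m := fun v =>
  match v with
  | .w => .num 1
  | .c => .num (i.val + 1)
  | .c1 => .num (if j = 1 then 1 else 0)
  | .c2 => .num (if j = 2 then 1 else 0)
  | .z => .num 0
  | .x => .num 0
  | .y => .num 0
  | .t => .aux (6 * (i.val + 1) + 4)

/-- For propositional variable `v` (numbered `v+1`), the two assignments
`(0, 0, 0, 0, v+1, v_{v}, v_{v}, a_{6(n+1)+v+1})` and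
`(0, 0, 0, 0, v+1, ¬v_{v}, ¬v_{v}, a_{6(n+1)+v+1})` (given by `b`). -/
def varRow {m : ℕ} (n : ℕ) (v : Fin m) (b : Bool) : V8 → Dom m := fun u =>
  match u with
  | .w => .num 0
  | .c => .num 0
  | .c1 => .num 0
  | .c2 => .num 0
  | .z => .num (v.val + 1)
  | .x => .lit v b
  | .y => .lit v b
  | .t => .aux (6 * (n + 1) + (v.val + 1))

/-- The team `X` associated with the 3-CNF instance `Φ`. -/
def theTeam {n m : ℕ} (Φ : Fin n → Fin 3 → Fin m × Bool) :
    Set (V8 → Dom m) :=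
  {s | (∃ i k, s = clauseRow Φ i k) ∨ (∃ i j, s = negRow n i j) ∨
    (∃ v b, s = varRow n v b)}

private lemma mem_team_clause {n m : ℕ} (Φ : Fin n → Fin 3 → Fin m × Bool) (i : Fin n)
    (k : Fin 3) : clauseRow Φ i k ∈ theTeam Φ := Or.inl ⟨i, k, rfl⟩

private lemma mem_team_neg {n m : ℕ} (Φ : Fin n → Fin 3 → Fin m × Bool) (i : Fin n)
    (j : Fin 3) : negRow n i j ∈ theTeam Φ := Or.inr (Or.inl ⟨i, j, rfl⟩)

private lemma mem_team_var {n m : ℕ} (Φ : Fin n → Fin 3 → Fin m × Bool) (v : Fin m)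
    (b : Bool) : varRow n v b ∈ theTeam Φ := Or.inr (Or.inr ⟨v, b, rfl⟩)

private lemma team_xy {n m : ℕ} {Φ : Fin n → Fin 3 → Fin m × Bool} {s : V8 → Dom m}
    (hs : s ∈ theTeam Φ) : s V8.x = s V8.y := by
  rcases hs with ⟨i, k, rfl⟩ | ⟨i, j, rfl⟩ | ⟨v, b, rfl⟩ <;> rfl

/-- `Φ` is satisfiable iff
`𝔄 ⊨_X (w ≠ 1 ∧ x ⊥_t y) ∨ (c₁ ⊥_c c₂ ∧ x ⊥_z y)`, where the lax team
semantics of the disjunction and the conditional independence atoms are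
spelled out explicitly. -/
theorem threeSat_iff_teamSat {n m : ℕ} (Φ : Fin n → Fin 3 → Fin m × Bool) :
    (∃ I : Fin m → Bool, ∀ i : Fin n, ∃ k : Fin 3, I (Φ i k).1 = (Φ i k).2)
      ↔ ∃ Y Z : Set (V8 → Dom m), Y ∪ Z = theTeam Φ ∧
          -- 𝔄 ⊨_Y w ≠ 1 ∧ x ⊥_t y
          ((∀ s ∈ Y, s V8.w ≠ Dom.num 1) ∧
           (∀ s ∈ Y, ∀ s' ∈ Y, s V8.t = s' V8.t →
             ∃ s'' ∈ Y, s'' V8.t = s V8.t ∧ s'' V8.x = s V8.x ∧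
               s'' V8.y = s' V8.y)) ∧
          -- 𝔄 ⊨_Z c₁ ⊥_c c₂ ∧ x ⊥_z y
          ((∀ s ∈ Z, ∀ s' ∈ Z, s V8.c = s' V8.c →
             ∃ s'' ∈ Z, s'' V8.c = s V8.c ∧ s'' V8.c1 = s V8.c1 ∧
               s'' V8.c2 = s' V8.c2) ∧
           (∀ s ∈ Z, ∀ s' ∈ Z, s V8.z = s' V8.z →
             ∃ s'' ∈ Z, s'' V8.z = s V8.z ∧ s'' V8.x = s V8.x ∧
               s'' V8.y = s' V8.y)) := by
  classical
  constructor
  · rintro ⟨I, hI⟩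
    refine ⟨{s | (∃ i k, s = clauseRow Φ i k ∧ I (Φ i k).1 ≠ (Φ i k).2) ∨
        ∃ v, s = varRow n v (!(I v))},
      {s | (∃ i k, s = clauseRow Φ i k ∧ I (Φ i k).1 = (Φ i k).2) ∨
        (∃ i j, s = negRow n i j) ∨ ∃ v, s = varRow n v (I v)}, ?_, ⟨?_, ?_⟩, ?_, ?_⟩
    · -- union is the team
      ext s
      simp only [Set.mem_union, Set.mem_setOf_eq, theTeam]
      constructor
      · rintro ((⟨i, k, rfl, -⟩ | ⟨v, rfl⟩) | (⟨i, k, rfl, -⟩ | ⟨i, j, rfl⟩ | ⟨v, rfl⟩))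
        · exact Or.inl ⟨i, k, rfl⟩
        · exact Or.inr (Or.inr ⟨v, _, rfl⟩)
        · exact Or.inl ⟨i, k, rfl⟩
        · exact Or.inr (Or.inl ⟨i, j, rfl⟩)
        · exact Or.inr (Or.inr ⟨v, _, rfl⟩)
      · rintro (⟨i, k, rfl⟩ | ⟨i, j, rfl⟩ | ⟨v, b, rfl⟩)
        · by_cases h : I (Φ i k).1 = (Φ i k).2
          · exact Or.inr (Or.inl ⟨i, k, rfl, h⟩)
          · exact Or.inl (Or.inl ⟨i, k, rfl, h⟩)
        · exact Or.inr (Or.inr (Or.inl ⟨i, j, rfl⟩))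
        · by_cases h : b = I v
          · exact Or.inr (Or.inr (Or.inr ⟨v, by rw [h]⟩))
          · refine Or.inl (Or.inr ⟨v, ?_⟩)
            have : b = !(I v) := by cases b <;> cases hIv : I v <;> simp_all
            rw [this]
    · -- w ≠ 1 on Y
      rintro s ((⟨i, k, rfl, -⟩ | ⟨v, rfl⟩)) h <;> simp [clauseRow, varRow] at h
    · -- x ⊥_t y on Y
      intro s hs s' hs' ht
      refine ⟨s', hs', ht.symm, ?_, rfl⟩
      rcases hs with ⟨i, k, rfl, -⟩ | ⟨v, rfl⟩ <;>
        rcases hs' with ⟨i', k', rfl, -⟩ | ⟨v', rfl⟩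
      · simp only [clauseRow, Dom.aux.injEq] at ht
        have hk := k.isLt; have hk' := k'.isLt
        have h1 : i = i' := Fin.ext (by omega)
        have h2 : k = k' := Fin.ext (by omega)
        rw [h1, h2]
      · simp only [clauseRow, varRow, Dom.aux.injEq] at ht
        have hk := k.isLt; have hi := i.isLt
        omega
      · simp only [clauseRow, varRow, Dom.aux.injEq] at ht
        have hk' := k'.isLt; have hi' := i'.isLt
        omega
      · simp only [varRow, Dom.aux.injEq] at ht
        have : v = v' := Fin.ext (by omega)
        rw [this]
    · -- c₁ ⊥_c c₂ on Z
      intro s hs s' hs' hc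
      have hform : ∀ u, ((∃ i k, u = clauseRow Φ i k ∧ I (Φ i k).1 = (Φ i k).2) ∨
          (∃ i j, u = negRow n i j) ∨ ∃ v, u = varRow n v (I v)) →
          (u V8.c = Dom.num 0 ∧ u V8.c1 = Dom.num 0 ∧ u V8.c2 = Dom.num 0) ∨
          ∃ i : Fin n, u V8.c = Dom.num (i.val + 1) ∧
            (u V8.c1 = Dom.num 0 ∨ u V8.c1 = Dom.num 1) ∧
            (u V8.c2 = Dom.num 0 ∨ u V8.c2 = Dom.num 1) := by
        rintro u (⟨i, k, rfl, -⟩ | ⟨i, j, rfl⟩ | ⟨v, rfl⟩)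
        · exact Or.inr ⟨i, rfl, Or.inr rfl, Or.inr rfl⟩
        · refine Or.inr ⟨i, rfl, ?_, ?_⟩
          · by_cases hj : j = 1
            · right; simp [negRow, hj]
            · left; simp [negRow, hj]
          · by_cases hj : j = 2
            · right; simp [negRow, hj]
            · left; simp [negRow, hj]
        · exact Or.inl ⟨rfl, rfl, rfl⟩
      rcases hform s hs with ⟨h0, h1, h2⟩ | ⟨i, hc0, hc1, hc2⟩ <;>
        rcases hform s' hs' with ⟨h0', h1', h2'⟩ | ⟨i', hc0', hc1', hc2'⟩
      · exact ⟨s, hs, rfl, rfl, h2.trans h2'.symm⟩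
      · rw [h0, hc0'] at hc; exact absurd hc (by simp)
      · rw [hc0, h0'] at hc; exact absurd hc (by simp)
      · rw [hc0, hc0'] at hc
        have hii : i = i' := by
          simp only [Dom.num.injEq] at hc
          exact Fin.ext (by omega)
        subst hii
        obtain ⟨k₀, hk₀⟩ := hI i
        rcases hc1 with hc1 | hc1 <;> rcases hc2' with hc2' | hc2'
        · exact ⟨negRow n i 0, Or.inr (Or.inl ⟨i, 0, rfl⟩),
            by simp [negRow, hc0], by simp [negRow, hc1], by simp [negRow, hc2']⟩
        · exact ⟨negRow n i 2, Or.inr (Or.inl ⟨i, 2, rfl⟩),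
            by simp [negRow, hc0], by simp [negRow, hc1], by simp [negRow, hc2']⟩
        · exact ⟨negRow n i 1, Or.inr (Or.inl ⟨i, 1, rfl⟩),
            by simp [negRow, hc0], by simp [negRow, hc1], by simp [negRow, hc2']⟩
        · exact ⟨clauseRow Φ i k₀, Or.inl ⟨i, k₀, rfl, hk₀⟩,
            by simp [clauseRow, hc0], by simp [clauseRow, hc1], by simp [clauseRow, hc2']⟩
    · -- x ⊥_z y on Z
      intro s hs s' hs' hz
      have hform : ∀ u, ((∃ i k, u = clauseRow Φ i k ∧ I (Φ i k).1 = (Φ i k).2) ∨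
          (∃ i j, u = negRow n i j) ∨ ∃ v, u = varRow n v (I v)) →
          (u V8.z = Dom.num 0 ∧ u V8.x = Dom.num 0 ∧ u V8.y = Dom.num 0) ∨
          ∃ v : Fin m, u V8.z = Dom.num (v.val + 1) ∧
            u V8.x = Dom.lit v (I v) ∧ u V8.y = Dom.lit v (I v) := by
        rintro u (⟨i, k, rfl, h⟩ | ⟨i, j, rfl⟩ | ⟨v, rfl⟩)
        · exact Or.inr ⟨(Φ i k).1, rfl, by simp [clauseRow, ← h], by simp [clauseRow, ← h]⟩
        · exact Or.inl ⟨rfl, rfl, rfl⟩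
        · exact Or.inr ⟨v, rfl, rfl, rfl⟩
      rcases hform s hs with ⟨h0, h1, h2⟩ | ⟨v, hz0, hx0, hy0⟩ <;>
        rcases hform s' hs' with ⟨h0', h1', h2'⟩ | ⟨v', hz0', hx0', hy0'⟩
      · exact ⟨s, hs, rfl, rfl, h2.trans h2'.symm⟩
      · rw [h0, hz0'] at hz; exact absurd hz (by simp)
      · rw [hz0, h0'] at hz; exact absurd hz (by simp)
      · rw [hz0, hz0'] at hz
        have hvv : v = v' := Fin.ext (by simpa using hz)
        subst hvv
        exact ⟨s, hs, rfl, rfl, hy0.trans hy0'.symm⟩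
  · rintro ⟨Y, Z, hYZ, ⟨hYw, hYt⟩, hZc, hZz⟩
    have hYteam : Y ⊆ theTeam Φ := hYZ ▸ Set.subset_union_left
    have hZteam : Z ⊆ theTeam Φ := hYZ ▸ Set.subset_union_right
    have hnegZ : ∀ (i : Fin n) (j : Fin 3), negRow (m := m) n i j ∈ Z := by
      intro i j
      have hmem : negRow (m := m) n i j ∈ Y ∪ Z := hYZ ▸ mem_team_neg Φ i j
      rcases hmem with h | h
      · exact absurd rfl (hYw _ h)
      · exact h
    have hvarZ : ∀ v : Fin m, varRow n v true ∈ Z ∨ varRow n v false ∈ Z := by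
      intro v
      by_contra hcon
      push_neg at hcon
      obtain ⟨h1, h2⟩ := hcon
      have m1 : varRow n v true ∈ Y := by
        rcases (hYZ ▸ mem_team_var Φ v true : _ ∈ Y ∪ Z) with h | h
        · exact h
        · exact absurd h h1
      have m2 : varRow n v false ∈ Y := by
        rcases (hYZ ▸ mem_team_var Φ v false : _ ∈ Y ∪ Z) with h | h
        · exact h
        · exact absurd h h2
      obtain ⟨s'', hs'', -, hx, hy⟩ := hYt _ m1 _ m2 rfl
      have hxy := team_xy (hYteam hs'')
      rw [hx, hy] at hxy
      simp [varRow] at hxy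
    have keyA : ∀ (v : Fin m) (b : Bool) (i : Fin n) (k : Fin 3),
        varRow n v b ∈ Z → clauseRow Φ i k ∈ Z → (Φ i k).1 = v → (Φ i k).2 = b := by
      intro v b i k hv hc hvk
      obtain ⟨s'', hs'', -, hx, hy⟩ := hZz _ hv _ hc (by simp [varRow, clauseRow, hvk])
      have hxy := team_xy (hZteam hs'')
      rw [hx, hy] at hxy
      simp only [varRow, clauseRow, hvk, Dom.lit.injEq] at hxy
      exact hxy.2.symm
    have keyB : ∀ i : Fin n, ∃ k, clauseRow Φ i k ∈ Z := by
      intro i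
      obtain ⟨s'', hs'', hc, hc1, hc2⟩ := hZc _ (hnegZ i 1) _ (hnegZ i 2) rfl
      simp only [negRow, if_pos rfl] at hc hc1 hc2
      rcases hZteam hs'' with ⟨i', k, heq⟩ | ⟨i', j, heq⟩ | ⟨v, b, heq⟩
      · subst heq
        simp only [clauseRow, Dom.num.injEq] at hc
        have : i' = i := Fin.ext (by omega)
        exact ⟨k, this ▸ hs''⟩
      · subst heq
        fin_cases j <;> simp [negRow] at hc1 hc2
      · subst heq
        simp [varRow] at hc
    refine ⟨fun v => if varRow n v true ∈ Z then true else false, fun i => ?_⟩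
    obtain ⟨k, hk⟩ := keyB i
    refine ⟨k, ?_⟩
    by_cases h : varRow n (Φ i k).1 true ∈ Z
    · simp only [if_pos h]
      exact (keyA _ _ _ _ h hk rfl).symm
    · simp only [if_neg h]
      rcases hvarZ (Φ i k).1 with h' | h'
      · exact absurd h' h
      · exact (keyA _ _ _ _ h' hk rfl).symm
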